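/- arXiv:1812.08692 — 8 statements merged into one kernel-verified Lean document; each statement's English description precedes it below -/
import Mathlib

section
/- Let Q be a division ring with valuation v, valuation ring R ⊂ Q, and residue division ring L = R/m where m = {x : v(x) > 0}. Let V ⊆ Qⁿ be a right Q-subspace, and let v₁, …, v_r ∈ V ∩ Rⁿ be elements whose images in Lⁿ form a basis of the L-subspace obtained as the image of V ∩ Rⁿ in Lⁿ. Then v₁, …, v_r form a basis of V as a right Q-vector space; in particular dim_Q V = dim_L (image of V ∩ Rⁿ in Lⁿ). -/
/-!
Independence: dividing a nontrivial right relation among the `w k` by its coefficient of least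
valuation gives an integral relation with a coefficient `1`, whose reduction is a nontrivial
relation among the reductions.

Spanning: let `W` be the span of the `w k` and `t` a uniformizer. Lifting the coefficients of the
reduction of an integral `y ∈ V` gives `y ∈ W + t (V ∩ Rⁿ)`, hence `y ∈ W + tᵏ (V ∩ Rⁿ)` for
every `k`. A linear form `G` vanishing on `W` is bounded below in valuation on `Rⁿ`, so `G y` has
arbitrarily large valuation and is `0`. Thus `G` vanishes on `V ∩ Rⁿ`, hence on `V`, and since
`W` is cut out by such forms, `V ≤ W`.
-/

open MulOpposite Submodule

section Reduction

variable {Q L Γ : Type*} [DivisionRing Q] [DivisionRing L] [LinearOrderedAddCommGroupWithTop Γ]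

structure IsResidueMap (v : AddValuation Q Γ) (ρ : Q → L) : Prop where
  map_one : ρ 1 = 1
  map_add : ∀ x y, 0 ≤ v x → 0 ≤ v y → ρ (x + y) = ρ x + ρ y
  map_mul : ∀ x y, 0 ≤ v x → 0 ≤ v y → ρ (x * y) = ρ x * ρ y

namespace IsResidueMap

variable {v : AddValuation Q Γ} {ρ : Q → L}

theorem map_zero (hρ : IsResidueMap v ρ) : ρ 0 = 0 := by
  simpa using hρ.map_add 0 0 (by simp) (by simp)

theorem map_sum (hρ : IsResidueMap v ρ) {κ : Type*} (s : Finset κ) (f : κ → Q)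
    (hf : ∀ k ∈ s, 0 ≤ v (f k)) : ρ (∑ k ∈ s, f k) = ∑ k ∈ s, ρ (f k) := by
  induction s using Finset.cons_induction with
  | empty => simpa using hρ.map_zero
  | cons a s ha ih =>
    have hs : ∀ k ∈ s, 0 ≤ v (f k) := fun k hk => hf k (Finset.mem_cons_of_mem hk)
    rw [Finset.sum_cons, Finset.sum_cons,
      hρ.map_add _ _ (hf a (Finset.mem_cons_self a s)) (v.map_le_sum hs), ih hs]

theorem map_sum_mul (hρ : IsResidueMap v ρ) {κ : Type*} [Fintype κ] {a b : κ → Q}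
    (ha : ∀ k, 0 ≤ v (a k)) (hb : ∀ k, 0 ≤ v (b k)) :
    ρ (∑ k, a k * b k) = ∑ k, ρ (a k) * ρ (b k) := by
  rw [hρ.map_sum _ _ fun k _ => by rw [v.map_mul]; exact add_nonneg (ha k) (hb k)]
  exact Finset.sum_congr rfl fun k _ => hρ.map_mul _ _ (ha k) (hb k)

end IsResidueMap

def AddValuation.integralPoints {ι : Type*} (v : AddValuation Q Γ) (V : Submodule Qᵐᵒᵖ (ι → Q)) :
    Set (ι → Q) :=
  {y | y ∈ V ∧ ∀ i, 0 ≤ v (y i)}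

theorem AddValuation.exists_nonneg_mul_inv {κ : Type*} [Finite κ] (v : AddValuation Q Γ)
    {c : κ → Q} (hc : c ≠ 0) : ∃ k₀, c k₀ ≠ 0 ∧ ∀ k, 0 ≤ v (c k * (c k₀)⁻¹) := by
  obtain ⟨k₁, hk₁⟩ := Function.ne_iff.1 hc
  have : Nonempty κ := ⟨k₁⟩
  obtain ⟨k₀, hk₀⟩ := Finite.exists_min fun k => v (c k)
  have hc₀ : c k₀ ≠ 0 := fun h =>
    hk₁ ((v.top_iff).1 (top_le_iff.1 ((v.top_iff.2 h).symm.trans_le (hk₀ k₁))))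
  refine ⟨k₀, hc₀, fun k => ?_⟩
  calc 0 = v (c k₀ * (c k₀)⁻¹) := by rw [mul_inv_cancel₀ hc₀, v.map_one]
    _ ≤ v (c k * (c k₀)⁻¹) := by rw [v.map_mul, v.map_mul]; exact add_le_add_left (hk₀ k) _

theorem linearIndependent_of_linearIndependent_reduction {κ ι : Type*} [Fintype κ]
    {v : AddValuation Q Γ} {ρ : Q → L} (hρ : IsResidueMap v ρ) {w : κ → ι → Q}
    (hwR : ∀ k i, 0 ≤ v (w k i)) (hind : LinearIndependent Lᵐᵒᵖ fun k i => ρ (w k i)) :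
    LinearIndependent Qᵐᵒᵖ w := by
  rw [Fintype.linearIndependent_iff]
  intro g hg
  by_contra hne
  have hc : (fun k => (g k).unop) ≠ 0 := fun h =>
    hne fun k => unop_injective (congrFun h k)
  obtain ⟨k₀, hk₀, hdR⟩ := v.exists_nonneg_mul_inv hc
  set d := fun k => (g k).unop * ((g k₀).unop)⁻¹
  have hrel : ∀ i, ∑ k, w k i * d k = 0 := by
    intro i
    have h : ∑ k, w k i * (g k).unop = 0 := by
      simpa [Finset.sum_apply, smul_eq_mul_unop] using congrFun hg i
    simp only [d, ← mul_assoc, ← Finset.sum_mul, h, zero_mul]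
  have hred := Fintype.linearIndependent_iff.1 hind (fun k => op (ρ (d k))) (by
    funext i
    have h := hρ.map_sum_mul (fun k => hwR k i) hdR
    rw [hrel, hρ.map_zero] at h
    simpa [Finset.sum_apply, smul_eq_mul_unop] using h.symm) k₀
  have hd₀ : d k₀ = 1 := mul_inv_cancel₀ hk₀
  simp [hd₀, hρ.map_one] at hred

theorem AddValuation.exists_le_apply_of_nonneg {ι : Type*} [Fintype ι] (v : AddValuation Q Γ)
    (G : (ι → Q) →ₗ[Qᵐᵒᵖ] Qᵐᵒᵖ) :
    ∃ B : Γ, ∀ y : ι → Q, (∀ i, 0 ≤ v (y i)) → B ≤ v (G y).unop := by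
  classical
  set a := fun i => (G (Pi.single i 1)).unop
  have hG : ∀ y : ι → Q, (G y).unop = ∑ i, a i * y i := by
    intro y
    have hy : y = ∑ i, op (y i) • Pi.single i (1 : Q) := by
      ext j
      simp [Finset.sum_apply, Pi.single_apply]
    conv_lhs => rw [hy]
    simp [a, map_sum, Finset.unop_sum]
  refine ⟨Finset.univ.inf fun i => v (a i), fun y hy => ?_⟩
  rw [hG]
  refine v.map_le_sum fun i _ => ?_
  rw [v.map_mul]
  exact le_add_of_le_of_nonneg (Finset.inf_le (Finset.mem_univ i)) (hy i)

end Reduction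

theorem Submodule.exists_sub_pow_smul_mem {R M : Type*} [Ring R] [AddCommGroup M] [Module R M]
    (W : Submodule R M) {S : Set M} {a : R} (h : ∀ y ∈ S, ∃ y' ∈ S, y - a • y' ∈ W) (k : ℕ) :
    ∀ y ∈ S, ∃ y' ∈ S, y - a ^ k • y' ∈ W := by
  induction k with
  | zero => exact fun y hy => ⟨y, hy, by simp⟩
  | succ k ih =>
    intro y hy
    obtain ⟨y₁, hy₁, hyy₁⟩ := ih y hy
    obtain ⟨y₂, hy₂, hy₁y₂⟩ := h y₁ hy₁
    refine ⟨y₂, hy₂, ?_⟩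
    have : y - a ^ (k + 1) • y₂ = (y - a ^ k • y₁) + a ^ k • (y₁ - a • y₂) := by
      rw [smul_sub, smul_smul, ← pow_succ]; abel
    rw [this]
    exact W.add_mem hyy₁ (W.smul_mem _ hy₁y₂)

theorem WithTop.eq_top_of_forall_add_natCast_le {B x : WithTop ℤ} (h : ∀ k : ℕ, B + k ≤ x) :
    x = ⊤ := by
  induction x with
  | top => rfl
  | coe x =>
    induction B with
    | top => simpa using h 0
    | coe b =>
      have := h (x - b + 1).toNat
      norm_cast at this
      omega

section Discrete

variable {Q L : Type*} [DivisionRing Q] [DivisionRing L] {v : AddValuation Q (WithTop ℤ)}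

theorem AddValuation.nonneg_mul_inv_of_pos {t x : Q} (ht : v t = 1) (hx : 0 < v x) :
    0 ≤ v (x * t⁻¹) := by
  rw [v.map_mul, v.map_inv, ht]
  induction h : v x with
  | top => simp
  | coe c =>
    rw [h] at hx
    norm_cast at hx
    have : (0 : WithTop ℤ) ≤ ((c + -1 : ℤ) : WithTop ℤ) := by exact_mod_cast (by omega)
    simpa using this

variable {ι κ : Type*} [Fintype κ] {ρ : Q → L} {V : Submodule Qᵐᵒᵖ (ι → Q)} {w : κ → ι → Q}

theorem exists_sub_op_smul_mem_span (hρ : IsResidueMap v ρ)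
    (hker : ∀ x, 0 ≤ v x → ρ x = 0 → 0 < v x) (hsurj : ∀ l, ∃ x, 0 ≤ v x ∧ ρ x = l)
    {t : Q} (ht : v t = 1) (hwV : ∀ k, w k ∈ V) (hwR : ∀ k i, 0 ≤ v (w k i))
    (hred : ∀ y ∈ v.integralPoints V,
      (fun i => ρ (y i)) ∈ span Lᵐᵒᵖ (Set.range fun k i => ρ (w k i)))
    {y : ι → Q} (hy : y ∈ v.integralPoints V) :
    ∃ y' ∈ v.integralPoints V, y - op t • y' ∈ span Qᵐᵒᵖ (Set.range w) := by
  obtain ⟨hyV, hyR⟩ := hy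
  obtain ⟨l, hl⟩ := (mem_span_range_iff_exists_fun Lᵐᵒᵖ).1 (hred y ⟨hyV, hyR⟩)
  choose c hcR hcρ using fun k => hsurj (l k).unop
  set u := ∑ k, op (c k) • w k
  have huW : u ∈ span Qᵐᵒᵖ (Set.range w) :=
    sum_mem fun k _ => smul_mem _ _ (subset_span ⟨k, rfl⟩)
  have huV : u ∈ V := span_le.2 (Set.range_subset_iff.2 hwV) huW
  have hu : ∀ i, u i = ∑ k, w k i * c k := fun i => by simp [u, Finset.sum_apply]
  have huR : ∀ i, 0 ≤ v (u i) := fun i => by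
    rw [hu]
    exact v.map_le_sum fun k _ => by rw [v.map_mul]; exact add_nonneg (hwR k i) (hcR k)
  have hρu : ∀ i, ρ (u i) = ρ (y i) := fun i => by
    rw [hu, hρ.map_sum_mul (fun k => hwR k i) hcR, ← congrFun hl i]
    simp [Finset.sum_apply, smul_eq_mul_unop, hcρ]
  set z := y - u
  have hzR : ∀ i, 0 ≤ v (z i) := fun i => v.map_le_sub (hyR i) (huR i)
  have hz : ∀ i, 0 < v (z i) := fun i => by
    refine hker _ (hzR i) ?_
    have h := hρ.map_add _ _ (hzR i) (huR i)
    rw [show z i + u i = y i from sub_add_cancel _ _, hρu] at h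
    simpa using h
  have ht₀ : t ≠ 0 := by rintro rfl; simp at ht
  refine ⟨op t⁻¹ • z, ⟨V.smul_mem _ (V.sub_mem hyV huV),
    fun i => AddValuation.nonneg_mul_inv_of_pos ht (hz i)⟩, ?_⟩
  rwa [smul_smul, ← op_mul, inv_mul_cancel₀ ht₀, op_one, one_smul, sub_sub_cancel]

theorem apply_eq_zero_of_forall_sub_op_smul_mem [Fintype ι] {t : Q}
    (ht : v t = 1) {W : Submodule Qᵐᵒᵖ (ι → Q)} {G : (ι → Q) →ₗ[Qᵐᵒᵖ] Qᵐᵒᵖ}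
    (hWG : W ≤ LinearMap.ker G) {S : Set (ι → Q)} (hSR : ∀ y ∈ S, ∀ i, 0 ≤ v (y i))
    (hS : ∀ y ∈ S, ∃ y' ∈ S, y - op t • y' ∈ W) {y : ι → Q} (hy : y ∈ S) : G y = 0 := by
  obtain ⟨B, hB⟩ := v.exists_le_apply_of_nonneg G
  suffices v (G y).unop = ⊤ by simpa [v.top_iff] using this
  refine WithTop.eq_top_of_forall_add_natCast_le (B := B) fun k => ?_
  obtain ⟨y', hy', hyy'⟩ := W.exists_sub_pow_smul_mem hS k y hy
  have hGy : (G y).unop = (G y').unop * t ^ k := by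
    have h := LinearMap.mem_ker.1 (hWG hyy')
    rw [map_sub, sub_eq_zero, map_smul, smul_eq_mul, ← op_pow] at h
    rw [h, unop_mul, unop_op]
  rw [hGy, v.map_mul, v.map_pow, ht, nsmul_one]
  exact add_le_add (hB y' (hSR y' hy')) le_rfl

theorem span_eq_of_span_reduction [Fintype ι] (hρ : IsResidueMap v ρ)
    (hker : ∀ x, 0 ≤ v x → ρ x = 0 → 0 < v x) (hsurj : ∀ l, ∃ x, 0 ≤ v x ∧ ρ x = l)
    {t : Q} (ht : v t = 1) (hwV : ∀ k, w k ∈ V) (hwR : ∀ k i, 0 ≤ v (w k i))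
    (hred : ∀ y ∈ v.integralPoints V,
      (fun i => ρ (y i)) ∈ span Lᵐᵒᵖ (Set.range fun k i => ρ (w k i))) :
    span Qᵐᵒᵖ (Set.range w) = V := by
  refine le_antisymm (span_le.2 (Set.range_subset_iff.2 hwV)) fun x hxV => ?_
  by_contra hxW
  obtain ⟨G, hGx, hWG⟩ := exists_le_ker_of_notMem hxW
  have hGS : ∀ y ∈ v.integralPoints V, G y = 0 := fun y =>
    apply_eq_zero_of_forall_sub_op_smul_mem ht hWG (fun _ hy => hy.2)
      fun _ => exists_sub_op_smul_mem_span hρ hker hsurj ht hwV hwR hred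
  have hx₀ : x ≠ 0 := by rintro rfl; simp at hGx
  obtain ⟨i₀, hxi₀, hxR⟩ := v.exists_nonneg_mul_inv hx₀
  have := hGS _ ⟨V.smul_mem (op (x i₀)⁻¹) hxV, hxR⟩
  simp [hxi₀, hGx] at this

end Discrete

/-- `R = {x | 0 ≤ v x}` is the valuation ring, and the residue division ring `L = R/m` is
encoded by the reduction map `ρ : Q → L` (a ring homomorphism on `R` with kernel `m`,
surjective onto `L`). Right vector spaces are modules over the opposite ring. -/
theorem stmt_3 {Q : Type*} [DivisionRing Q] {L : Type*} [DivisionRing L]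
    (v : Q → WithTop ℤ)
    (hmul : ∀ a b : Q, v (a * b) = v a + v b)
    (hadd : ∀ a b : Q, min (v a) (v b) ≤ v (a + b))
    (htop : ∀ x : Q, v x = ⊤ ↔ x = 0)
    (hsurjv : ∀ m : ℤ, ∃ x : Q, v x = (m : WithTop ℤ))
    (ρ : Q → L)
    (hρ1 : ρ 1 = 1)
    (hρadd : ∀ x y : Q, 0 ≤ v x → 0 ≤ v y → ρ (x + y) = ρ x + ρ y)
    (hρmul : ∀ x y : Q, 0 ≤ v x → 0 ≤ v y → ρ (x * y) = ρ x * ρ y)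
    (hρker : ∀ x : Q, 0 ≤ v x → (ρ x = 0 ↔ 0 < v x))
    (hρsurj : ∀ l : L, ∃ x : Q, 0 ≤ v x ∧ ρ x = l)
    {n r : ℕ} (V : Submodule Qᵐᵒᵖ (Fin n → Q))
    (w : Fin r → (Fin n → Q))
    (hwV : ∀ k, w k ∈ V) (hwR : ∀ k i, 0 ≤ v (w k i))
    -- the reductions of `w` form a basis of the image of `V ∩ Rⁿ` in `Lⁿ`:
    (hind : LinearIndependent Lᵐᵒᵖ (fun k : Fin r => fun i => ρ (w k i)))
    (hspan : Submodule.span Lᵐᵒᵖ (Set.range (fun k : Fin r => fun i => ρ (w k i)))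
      = Submodule.span Lᵐᵒᵖ
          {y : Fin n → L | ∃ x ∈ V, (∀ i, 0 ≤ v (x i)) ∧ y = fun i => ρ (x i)}) :
    LinearIndependent Qᵐᵒᵖ w ∧ Submodule.span Qᵐᵒᵖ (Set.range w) = V ∧
      Module.finrank Qᵐᵒᵖ V = r := by
  have hv₁ : v 1 = 0 := by
    have h := hmul 1 1
    rw [one_mul] at h
    lift v 1 to ℤ using (htop 1).not.2 one_ne_zero with c
    norm_cast at h ⊢
    omega
  let v' := AddValuation.of v ((htop 0).2 rfl) hv₁ hadd hmul
  have hρ : IsResidueMap v' ρ := ⟨hρ1, hρadd, hρmul⟩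
  obtain ⟨t, ht⟩ := hsurjv 1
  have hli := linearIndependent_of_linearIndependent_reduction (v := v') hρ hwR hind
  have hspanV := span_eq_of_span_reduction (v := v') hρ (fun x hx => (hρker x hx).1) hρsurj ht
    hwV hwR fun y hy => hspan ▸ subset_span ⟨y, hy.1, hy.2, rfl⟩
  refine ⟨hli, hspanV, ?_⟩
  rw [← hspanV, finrank_span_eq_card hli, Fintype.card_fin]
end

section
/- Let E be a ring that is a left and right Ore domain with division ring of fractions Q, and let v : E → ℤ ∪ {∞} be a valuation on E (v(ab) = v(a)+v(b), v(a+b) ≥ min(v(a),v(b)), v(a) = ∞ iff a = 0). Then there is a unique valuation on Q extending v, given by v(φ⁻¹ψ) = −v(φ) + v(ψ) for φ, ψ ∈ E, φ ≠ 0. -/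
/-!
Writing `q = φ⁻¹ψ`, the value `-v φ + v ψ` is forced, so uniqueness is immediate and existence is a
matter of well-definedness. For `φ ≠ 0` the left Ore condition gives a relation `α φ' = β φ` with
`α ≠ 0`. Applying `v` to it shows that `-v φ + v ψ` does not depend on how `q` is written; the same
relation brings two fractions to a common denominator `D⁻¹P`, `D⁻¹R`, which reduces the ultrametric
inequality on `Q` to the one on `E`. As `v` is finite away from `0`, identities between values can
be checked after adding finite values of `v` to both sides.
-/

open LinearOrderedAddCommGroupWithTop

section ValueGroup

variable {R Γ : Type*} [LinearOrderedAddCommGroupWithTop Γ]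

theorem map_one_eq_zero_of_map_mul [MulZeroOneClass R] [Nontrivial R] {v : R → Γ}
    (hmul : ∀ a b : R, v (a * b) = v a + v b) (htop : ∀ a : R, v a = ⊤ ↔ a = 0) : v 1 = 0 := by
  have h1 : v 1 ≠ ⊤ := (htop 1).not.2 one_ne_zero
  rw [← add_right_inj_of_ne_top h1, add_zero, ← hmul, one_mul]

end ValueGroup

namespace Subring

variable {Q Γ : Type*} [DivisionRing Q] [LinearOrderedAddCommGroupWithTop Γ] {E : Subring Q}
  {v : E → Γ}

-- In the sense of Goldie: `E` is a left order in `Q`.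
def IsLeftOrder (E : Subring Q) : Prop :=
  ∀ q : Q, ∃ φ ψ : E, (φ : Q) ≠ 0 ∧ q = (φ : Q)⁻¹ * ψ

theorem ne_top_of_coe_ne_zero (htop : ∀ a : E, v a = ⊤ ↔ a = 0) {a : E} (ha : (a : Q) ≠ 0) :
    v a ≠ ⊤ :=
  (htop a).not.2 fun h => ha (by simp [h])

theorem add_eq_add_of_coe_mul_eq (hmul : ∀ a b : E, v (a * b) = v a + v b) {α x β y : E}
    (h : (α : Q) * x = β * y) : v α + v x = v β + v y := by
  rw [← hmul, ← hmul]
  exact congrArg v (Subtype.ext h)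

namespace IsLeftOrder

theorem exists_mul_eq_mul (hE : E.IsLeftOrder) (x : E) {y : E} (hy : (y : Q) ≠ 0) :
    ∃ α β : E, (α : Q) ≠ 0 ∧ (α : Q) * x = β * y := by
  obtain ⟨α, β, hα, h⟩ := hE (x * (y : Q)⁻¹)
  refine ⟨α, β, hα, ?_⟩
  calc (α : Q) * x = α * (x * (y : Q)⁻¹) * y := by rw [mul_assoc, inv_mul_cancel_right₀ hy]
    _ = β * y := by rw [h, mul_inv_cancel_left₀ hα]

theorem exists_common_denominator (hE : E.IsLeftOrder) (a b : Q) :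
    ∃ D P R : E, (D : Q) ≠ 0 ∧ a = (D : Q)⁻¹ * P ∧ b = (D : Q)⁻¹ * R := by
  obtain ⟨φ, ψ, hφ, rfl⟩ := hE a
  obtain ⟨φ', ψ', hφ', rfl⟩ := hE b
  obtain ⟨α, β, hα, h⟩ := hE.exists_mul_eq_mul φ' hφ
  have hβ : (β : Q) ≠ 0 := left_ne_zero_of_mul (h ▸ mul_ne_zero hα hφ')
  refine ⟨β * φ, β * ψ, α * ψ', mul_ne_zero hβ hφ, ?_, ?_⟩
  · rw [coe_mul, coe_mul, mul_inv_rev, mul_assoc, inv_mul_cancel_left₀ hβ]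
  · rw [coe_mul, coe_mul, ← h, mul_inv_rev, mul_assoc, inv_mul_cancel_left₀ hα]

theorem add_eq_add_of_inv_mul_eq (hE : E.IsLeftOrder) (hmul : ∀ a b : E, v (a * b) = v a + v b)
    (htop : ∀ a : E, v a = ⊤ ↔ a = 0) {φ ψ φ' ψ' : E} (hφ : (φ : Q) ≠ 0) (hφ' : (φ' : Q) ≠ 0)
    (h : (φ : Q)⁻¹ * ψ = (φ' : Q)⁻¹ * ψ') : v φ' + v ψ = v φ + v ψ' := by
  obtain ⟨α, β, hα, hφ'φ⟩ := hE.exists_mul_eq_mul φ' hφ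
  have hψ'ψ : (α : Q) * ψ' = β * ψ := by
    rw [← mul_inv_cancel_left₀ hφ' (ψ' : Q), ← h, ← mul_assoc, ← mul_assoc, hφ'φ,
      mul_inv_cancel_right₀ hφ]
  have e₁ := add_eq_add_of_coe_mul_eq hmul hφ'φ
  have e₂ := add_eq_add_of_coe_mul_eq hmul hψ'ψ
  rw [← add_right_inj_of_ne_top (ne_top_of_coe_ne_zero htop hα)]
  calc v α + (v φ' + v ψ) = v β + v φ + v ψ := by rw [← add_assoc, e₁]
    _ = v φ + (v α + v ψ') := by rw [e₂]; abel
    _ = v α + (v φ + v ψ') := by abel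

noncomputable def extend (hE : E.IsLeftOrder) (v : E → Γ) (q : Q) : Γ :=
  -v (hE q).choose + v (hE q).choose_spec.choose

theorem extend_inv_mul_add (hE : E.IsLeftOrder) (hmul : ∀ a b : E, v (a * b) = v a + v b)
    (htop : ∀ a : E, v a = ⊤ ↔ a = 0) (φ ψ : E) (hφ : (φ : Q) ≠ 0) :
    hE.extend v ((φ : Q)⁻¹ * ψ) + v φ = v ψ := by
  obtain ⟨hφ₀, hq⟩ := (hE ((φ : Q)⁻¹ * ψ)).choose_spec.choose_spec
  have hv := hE.add_eq_add_of_inv_mul_eq hmul htop hφ₀ hφ hq.symm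
  rw [extend, add_assoc, add_comm _ (v φ), hv, neg_add_cancel_left_of_ne_top
    (ne_top_of_coe_ne_zero htop hφ₀)]

theorem eq_of_inv_mul_add_eq (hE : E.IsLeftOrder) (htop : ∀ a : E, v a = ⊤ ↔ a = 0) {w₁ w₂ : Q → Γ}
    (hw₁ : ∀ φ ψ : E, (φ : Q) ≠ 0 → w₁ ((φ : Q)⁻¹ * ψ) + v φ = v ψ)
    (hw₂ : ∀ φ ψ : E, (φ : Q) ≠ 0 → w₂ ((φ : Q)⁻¹ * ψ) + v φ = v ψ) : w₁ = w₂ := by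
  funext q
  obtain ⟨φ, ψ, hφ, rfl⟩ := hE q
  rw [← add_left_inj_of_ne_top (ne_top_of_coe_ne_zero htop hφ), hw₁ φ ψ hφ, hw₂ φ ψ hφ]

theorem extend_coe (hE : E.IsLeftOrder) (hmul : ∀ a b : E, v (a * b) = v a + v b)
    (htop : ∀ a : E, v a = ⊤ ↔ a = 0) (a : E) : hE.extend v a = v a := by
  have h := hE.extend_inv_mul_add hmul htop 1 a one_ne_zero
  rwa [coe_one, inv_one, one_mul, map_one_eq_zero_of_map_mul hmul htop, add_zero] at h

theorem extend_eq_top_iff (hE : E.IsLeftOrder) (hmul : ∀ a b : E, v (a * b) = v a + v b)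
    (htop : ∀ a : E, v a = ⊤ ↔ a = 0) (q : Q) : hE.extend v q = ⊤ ↔ q = 0 := by
  refine ⟨fun hq => ?_, fun hq => ?_⟩
  · obtain ⟨φ, ψ, hφ, rfl⟩ := hE q
    have h := hE.extend_inv_mul_add hmul htop φ ψ hφ
    rw [hq, top_add, eq_comm, htop] at h
    simp [h]
  · have h := hE.extend_coe hmul htop 0
    rwa [coe_zero, ← hq, (htop 0).2 rfl] at h

theorem extend_mul (hE : E.IsLeftOrder) (hmul : ∀ a b : E, v (a * b) = v a + v b)
    (htop : ∀ a : E, v a = ⊤ ↔ a = 0) (a b : Q) :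
    hE.extend v (a * b) = hE.extend v a + hE.extend v b := by
  obtain ⟨φ, ψ, hφ, rfl⟩ := hE a
  obtain ⟨φ', ψ', hφ', rfl⟩ := hE b
  obtain ⟨α, β, hα, hψφ'⟩ := hE.exists_mul_eq_mul ψ hφ'
  have hab : (φ : Q)⁻¹ * ψ * ((φ' : Q)⁻¹ * ψ') = ((α * φ : E) : Q)⁻¹ * (β * ψ' : E) := by
    have hswap : (ψ : Q) * (φ' : Q)⁻¹ = (α : Q)⁻¹ * β := by
      rw [eq_inv_mul_iff_mul_eq₀ hα, ← mul_assoc, hψφ', mul_inv_cancel_right₀ hφ']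
    rw [coe_mul, coe_mul, mul_inv_rev, mul_assoc, ← mul_assoc (ψ : Q), hswap]
    simp only [mul_assoc]
  have hαφ : ((α * φ : E) : Q) ≠ 0 := mul_ne_zero hα hφ
  have h := hE.extend_inv_mul_add hmul htop (α * φ) (β * ψ') hαφ
  rw [← hab, hmul, hmul] at h
  have hc : v α + v φ + v φ' ≠ ⊤ := add_ne_top.2
    ⟨add_ne_top.2 ⟨ne_top_of_coe_ne_zero htop hα, ne_top_of_coe_ne_zero htop hφ⟩,
      ne_top_of_coe_ne_zero htop hφ'⟩
  rw [← add_left_inj_of_ne_top hc]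
  calc hE.extend v (_ * _) + (v α + v φ + v φ') = v β + v φ' + v ψ' := by rw [← add_assoc, h]; abel
    _ = v α + v ψ + v ψ' := by rw [add_eq_add_of_coe_mul_eq hmul hψφ']
    _ = _ := by
      rw [← hE.extend_inv_mul_add hmul htop φ ψ hφ, ← hE.extend_inv_mul_add hmul htop φ' ψ' hφ']
      abel

theorem min_extend_le_extend_add (hE : E.IsLeftOrder) (hmul : ∀ a b : E, v (a * b) = v a + v b)
    (hadd : ∀ a b : E, min (v a) (v b) ≤ v (a + b)) (htop : ∀ a : E, v a = ⊤ ↔ a = 0) (a b : Q) :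
    min (hE.extend v a) (hE.extend v b) ≤ hE.extend v (a + b) := by
  obtain ⟨D, P, R, hD, rfl, rfl⟩ := hE.exists_common_denominator a b
  rw [← add_le_add_iff_left_of_ne_top (ne_top_of_coe_ne_zero htop hD), ← min_add_add_right,
    ← mul_add, ← coe_add]
  simp only [hE.extend_inv_mul_add hmul htop D _ hD]
  exact hadd P R

end IsLeftOrder

end Subring

/-- A valuation on a left and right Ore domain `E` extends uniquely to its division ring of
fractions `Q` (encoded as: `E` is a subring of the division ring `Q` such that every element
of `Q` is a left fraction `φ⁻¹ * ψ` with `φ, ψ ∈ E`, `φ ≠ 0`), via `v(φ⁻¹ψ) = -v(φ) + v(ψ)`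
(written additively as `w(φ⁻¹ψ) + v(φ) = v(ψ)`). -/
theorem stmt_4 {Q : Type*} [DivisionRing Q] (E : Subring Q)
    (hOre : ∀ q : Q, ∃ φ ψ : E, (φ : Q) ≠ 0 ∧ q = (φ : Q)⁻¹ * (ψ : Q))
    (v : E → WithTop ℤ)
    (hmul : ∀ a b : E, v (a * b) = v a + v b)
    (hadd : ∀ a b : E, min (v a) (v b) ≤ v (a + b))
    (htop : ∀ a : E, v a = ⊤ ↔ a = 0) :
    ∃! w : Q → WithTop ℤ,
      (∀ a b : Q, w (a * b) = w a + w b) ∧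
      (∀ a b : Q, min (w a) (w b) ≤ w (a + b)) ∧
      (∀ x : Q, w x = ⊤ ↔ x = 0) ∧
      (∀ a : E, w (a : Q) = v a) ∧
      (∀ φ ψ : E, (φ : Q) ≠ 0 → w ((φ : Q)⁻¹ * (ψ : Q)) + v φ = v ψ) := by
  have hE : E.IsLeftOrder := hOre
  refine ⟨hE.extend v, ⟨hE.extend_mul hmul htop, hE.min_extend_le_extend_add hmul hadd htop,
    hE.extend_eq_top_iff hmul htop, hE.extend_coe hmul htop, hE.extend_inv_mul_add hmul htop⟩, ?_⟩
  rintro w ⟨-, -, -, -, hw⟩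
  exact hE.eq_of_inv_mul_add_eq htop hw (hE.extend_inv_mul_add hmul htop)
end

section
/- Let K be an algebraically closed field of characteristic p > 0 and let L be a field extension of K of transcendence degree 1. For any x, y ∈ L \ K, either x is separable algebraic over K(y) or y is separable algebraic over K(x). -/
/-!
Take a nonzero polynomial relation `f(x, y) = 0` over `K` of minimal total degree. If some
partial derivative `∂f/∂Xᵢ` does not vanish at `(x, y)`, then viewing `f` as a polynomial in the
`i`-th variable over the field generated by the other one shows that this coordinate is a simple
root, hence separable. Otherwise every `∂f/∂Xᵢ` is a relation of smaller degree, so it is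
identically zero; then only exponents divisible by `p` occur in `f`, and since `K` is perfect,
`f = g ^ p` for a relation `g` of smaller degree, a contradiction.
-/

open MvPolynomial

theorem Polynomial.isSeparable_of_aeval_derivative_ne_zero {F L : Type*} [Field F] [Field L]
    [Algebra F L] {z : L} {P : Polynomial F} (h0 : Polynomial.aeval z P = 0)
    (h1 : Polynomial.aeval z (Polynomial.derivative P) ≠ 0) : IsSeparable F z := by
  have hint : IsIntegral F z := IsAlgebraic.isIntegral ⟨P, by rintro rfl; simp at h1, h0⟩
  rw [IsSeparable, Polynomial.separable_iff_derivative_ne_zero (minpoly.irreducible hint)]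
  intro hder
  obtain ⟨Q, rfl⟩ := minpoly.dvd F z h0
  simp [Polynomial.derivative_mul, hder] at h1

namespace MvPolynomial

variable {R σ : Type*}

theorem derivative_aeval_eq_aeval_pderiv [CommSemiring R] {S : Type*} [CommSemiring S]
    [Algebra R S] {g : σ → Polynomial S} {i : σ}
    (hgi : Polynomial.derivative (g i) = 1) (hg : ∀ j ≠ i, Polynomial.derivative (g j) = 0)
    (f : MvPolynomial σ R) :
    Polynomial.derivative (aeval g f) = aeval g (pderiv i f) := by
  classical
  induction f using MvPolynomial.induction_on with
  | C a => simp [Polynomial.algebraMap_apply]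
  | add f₁ f₂ h₁ h₂ => simp [h₁, h₂]
  | mul_X f j h =>
    simp only [map_mul, aeval_X, Polynomial.derivative_mul, h, Derivation.leibniz, pderiv_X,
      smul_eq_mul, map_add]
    by_cases hj : j = i
    · subst hj; simp [hgi]; ring
    · simp [hg j hj, Ne.symm hj]; ring

theorem totalDegree_pderiv_lt [CommSemiring R] {f : MvPolynomial σ R} {i : σ}
    (h : pderiv i f ≠ 0) : (pderiv i f).totalDegree < f.totalDegree := by
  classical
  obtain ⟨m, hm, hdeg⟩ := Finset.exists_mem_eq_sup _ (support_nonempty.mpr h)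
    (fun s : σ →₀ ℕ ↦ s.sum fun _ e ↦ e)
  have hm' : m + Finsupp.single i 1 ∈ f.support := by
    rw [mem_support_iff, coeff_pderiv] at hm
    exact mem_support_iff.mpr (left_ne_zero_of_mul hm)
  calc (pderiv i f).totalDegree = m.sum fun _ e ↦ e := hdeg
    _ < (m + Finsupp.single i 1).sum fun _ e ↦ e := by
        rw [Finsupp.sum_add_index' (fun _ ↦ rfl) (fun _ _ _ ↦ rfl)]; simp
    _ ≤ f.totalDegree := le_totalDegree hm'

theorem totalDegree_pow_of_isDomain [CommRing R] [IsDomain R] (f : MvPolynomial σ R) (n : ℕ) :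
    (f ^ n).totalDegree = n * f.totalDegree := by
  rcases eq_or_ne f 0 with rfl | hf
  · rcases n with _ | n <;> simp
  induction n with
  | zero => simp
  | succ n ih => rw [pow_succ, totalDegree_mul_of_isDomain (pow_ne_zero _ hf) hf, ih]; ring

theorem dvd_of_mem_support_of_pderiv_eq_zero [CommSemiring R] [NoZeroDivisors R] (p : ℕ)
    [CharP R p] {f : MvPolynomial σ R} {i : σ} (h : pderiv i f = 0) {m : σ →₀ ℕ}
    (hm : m ∈ f.support) : p ∣ m i := by
  classical
  rcases Nat.eq_zero_or_pos (m i) with hmi | hmi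
  · simp [hmi]
  have hm' : m - Finsupp.single i 1 + Finsupp.single i 1 = m :=
    tsub_add_cancel_of_le (Finsupp.single_le_iff.mpr hmi)
  have hcoeff := coeff_pderiv (i := i) f (m - Finsupp.single i 1)
  rw [h, coeff_zero, hm', eq_comm] at hcoeff
  have hcast : ((m i : ℕ) : R) = 0 := by
    have := (mul_eq_zero.mp hcoeff).resolve_left (mem_support_iff.mp hm)
    rwa [Finsupp.tsub_apply, Finsupp.single_eq_same, ← Nat.cast_succ, Nat.succ_eq_add_one,
      Nat.sub_add_cancel hmi] at this
  exact (CharP.cast_eq_zero_iff R p _).mp hcast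

theorem monomial_mem_range_frobenius [CommSemiring R] (p : ℕ) [ExpChar R p] [PerfectRing R p]
    {m : σ →₀ ℕ} (hm : ∀ i, p ∣ m i) (c : R) :
    monomial m c ∈ (frobenius (MvPolynomial σ R) p).rangeS := by
  refine ⟨monomial (m.mapRange (· / p) (Nat.zero_div p)) ((frobeniusEquiv R p).symm c), ?_⟩
  have hpm : p • m.mapRange (· / p) (Nat.zero_div p) = m := by
    ext i; simp [Nat.mul_div_cancel' (hm i)]
  rw [frobenius_def, monomial_pow, hpm, ← frobenius_def, frobenius_apply_frobeniusEquiv_symm]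

theorem mem_range_frobenius_of_forall_pderiv_eq_zero [CommSemiring R] [NoZeroDivisors R]
    (p : ℕ) [Fact p.Prime] [CharP R p] [PerfectRing R p] {f : MvPolynomial σ R}
    (h : ∀ i, pderiv i f = 0) : f ∈ (frobenius (MvPolynomial σ R) p).rangeS := by
  rw [f.as_sum]
  exact sum_mem fun m hm ↦ monomial_mem_range_frobenius p
    (fun i ↦ dvd_of_mem_support_of_pderiv_eq_zero p (h i) hm) _

end MvPolynomial

theorem isSeparable_of_aeval_eq_zero_of_aeval_pderiv_ne_zero {K L σ : Type*} [Field K]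
    [Field L] [Algebra K L] {a : σ → L} {f : MvPolynomial σ K} (hf : aeval a f = 0) {i : σ}
    (hi : aeval a (pderiv i f) ≠ 0) :
    IsSeparable (IntermediateField.adjoin K (a '' {i}ᶜ)) (a i) := by
  classical
  set F := IntermediateField.adjoin K (a '' {i}ᶜ)
  -- `aeval g f` is `f` as a polynomial in the `i`-th variable over `F`.
  let g : σ → Polynomial F := fun j ↦
    if h : j = i then Polynomial.X
    else Polynomial.C ⟨a j, IntermediateField.subset_adjoin K _ ⟨j, h, rfl⟩⟩
  have hgi : Polynomial.derivative (g i) = 1 := by simp [g]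
  have hg : ∀ j ≠ i, Polynomial.derivative (g j) = 0 := fun j h ↦ by simp [g, h]
  have heval : ∀ φ : MvPolynomial σ K, Polynomial.aeval (a i) (aeval g φ) = aeval a φ := by
    intro φ
    rw [← AlgHom.restrictScalars_apply K (Polynomial.aeval (a i)), comp_aeval_apply]
    congr 2 with j
    by_cases h : j = i
    · subst h; simp [g]
    · simp [g, h]
  refine Polynomial.isSeparable_of_aeval_derivative_ne_zero (P := aeval g f) ?_ ?_
  · rw [heval, hf]
  · rwa [derivative_aeval_eq_aeval_pderiv hgi hg, heval]

theorem exists_isSeparable_adjoin_image_compl_of_aeval_eq_zero {K L σ : Type*} [Field K]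
    [Field L] [Algebra K L] (p : ℕ) [Fact p.Prime] [CharP K p] [PerfectRing K p] {a : σ → L}
    {f : MvPolynomial σ K} (hf0 : f ≠ 0) (hf : aeval a f = 0) :
    ∃ i, IsSeparable (IntermediateField.adjoin K (a '' {i}ᶜ)) (a i) := by
  have hp : p.Prime := Fact.out
  induction hd : f.totalDegree using Nat.strong_induction_on generalizing f with
  | _ d ih =>
  by_contra hnone
  have hvanish : ∀ i, aeval a (pderiv i f) = 0 := fun i ↦ by
    by_contra hi
    exact hnone ⟨i, isSeparable_of_aeval_eq_zero_of_aeval_pderiv_ne_zero hf hi⟩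
  have hpderiv : ∀ i, pderiv i f = 0 := fun i ↦ by
    by_contra hi
    exact hnone (ih _ (hd ▸ totalDegree_pderiv_lt hi) hi (hvanish i) rfl)
  obtain ⟨g, rfl⟩ := mem_range_frobenius_of_forall_pderiv_eq_zero p hpderiv
  rw [frobenius_def] at hf0 hf hd
  have hg0 : g ≠ 0 := by rintro rfl; simp [hp.ne_zero] at hf0
  have hg : aeval a g = 0 := by rw [map_pow] at hf; exact (pow_eq_zero_iff hp.ne_zero).mp hf
  have hgdeg : g.totalDegree ≠ 0 := by
    intro h
    rw [totalDegree_eq_zero_iff_eq_C.mp h, aeval_C, map_eq_zero] at hg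
    exact hg0 (by rw [totalDegree_eq_zero_iff_eq_C.mp h, hg, map_zero])
  rw [totalDegree_pow_of_isDomain] at hd
  exact hnone (ih _ (hd ▸ lt_mul_left (Nat.pos_of_ne_zero hgdeg) hp.one_lt) hg0 hg rfl)

theorem stmt_6_general {K L : Type*} [Field K] [IsAlgClosed K] [Field L] [Algebra K L]
    (p : ℕ) (hp : p.Prime) [CharP K p]
    (htr2 : ∀ a b : L, ¬ AlgebraicIndependent K ![a, b])
    (x y : L) :
    IsSeparable (IntermediateField.adjoin K {y}) x ∨
    IsSeparable (IntermediateField.adjoin K {x}) y := by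
  have : Fact p.Prime := ⟨hp⟩
  obtain ⟨f, hf, hf0⟩ : ∃ f : MvPolynomial (Fin 2) K, aeval ![x, y] f = 0 ∧ f ≠ 0 := by
    simpa [algebraicIndependent_iff] using htr2 x y
  have h0 : ![x, y] '' {0}ᶜ = {y} := by ext z; simp [Fin.exists_fin_two, eq_comm]
  have h1 : ![x, y] '' {1}ᶜ = {x} := by ext z; simp [Fin.exists_fin_two, eq_comm]
  have hsep := exists_isSeparable_adjoin_image_compl_of_aeval_eq_zero p hf0 hf
  rwa [Fin.exists_fin_two, h0, h1] at hsep

/-- Let `K` be algebraically closed of characteristic `p > 0` and `L/K` a field extension of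
transcendence degree 1 (encoded: some element is transcendental, and no two elements are
algebraically independent over `K`). For `x, y ∈ L \ K`, either `x` is separable algebraic
over `K(y)` or `y` is separable algebraic over `K(x)`. -/
theorem stmt_6 {K L : Type*} [Field K] [IsAlgClosed K] [Field L] [Algebra K L]
    (p : ℕ) (hp : p.Prime) [CharP K p]
    (htr1 : ∃ t : L, Transcendental K t)
    (htr2 : ∀ a b : L, ¬ AlgebraicIndependent K ![a, b])
    (x y : L) (hx : x ∉ Set.range (algebraMap K L)) (hy : y ∉ Set.range (algebraMap K L)) :
    IsSeparable (IntermediateField.adjoin K {y}) x ∨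
    IsSeparable (IntermediateField.adjoin K {x}) y :=
  stmt_6_general p hp htr2 x y
end

section
/- Let ν : Bases → ℝ ∪ {∞} be a valuation of a matroid of rank r on ground set E (satisfying the valuated basis exchange axiom). Let S ⊆ E with |S| = r − 2 and let a, b, c, d be four distinct elements of E \ S. Then the minimum of the three quantities ν(S∪{a,b}) + ν(S∪{c,d}), ν(S∪{a,c}) + ν(S∪{b,d}), ν(S∪{a,d}) + ν(S∪{b,c}) is attained at least twice. -/
/-!
Exchanging `a` out of `S ∪ {a,b}` into `S ∪ {c,d}` must bring in `c` or `d`, so the valuated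
exchange axiom bounds the pairing `ab|cd` from below by one of the other two pairings
`ad|bc`, `ac|bd`. Applied to `ab|cd`, `ac|bd` and `ad|bc` in turn, this says that each of the
three sums dominates one of the other two, and then the minimum cannot be attained only once.
-/

open Finset

lemma eq_min_or_eq_min_or_eq_min {α : Type*} [LinearOrder α] {p q r : α}
    (hp : r ≤ p ∨ q ≤ p) (hq : p ≤ q ∨ r ≤ q) (hr : p ≤ r ∨ q ≤ r) :
    p = min q r ∨ q = min p r ∨ r = min p q := by
  grind

lemma exchange_insert_insert_le {E : Type*} [DecidableEq E] (r : ℕ) (ν : Finset E → WithTop ℝ)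
    (hexch : ∀ B B' : Finset E, B.card = r → B'.card = r → ∀ i ∈ B \ B',
      ∃ j ∈ B' \ B, ν (insert j (B.erase i)) + ν (insert i (B'.erase j)) ≤ ν B + ν B')
    (S : Finset E) (hS : S.card + 2 = r)
    {a b c d : E} (ha : a ∉ S) (hb : b ∉ S) (hc : c ∉ S) (hd : d ∉ S)
    (hab : a ≠ b) (hac : a ≠ c) (had : a ≠ d) (hcd : c ≠ d) :
    ν (insert c (insert b S)) + ν (insert a (insert d S)) ≤
      ν (insert a (insert b S)) + ν (insert c (insert d S)) ∨
    ν (insert d (insert b S)) + ν (insert a (insert c S)) ≤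
      ν (insert a (insert b S)) + ν (insert c (insert d S)) := by
  have haB : a ∉ insert b S := by simp [hab, ha]
  have hcB' : c ∉ insert d S := by simp [hcd, hc]
  have hdB' : d ∉ insert c S := by simp [hcd.symm, hd]
  have hB : (insert a (insert b S)).card = r := by
    rw [card_insert_of_notMem haB, card_insert_of_notMem hb, hS]
  have hB' : (insert c (insert d S)).card = r := by
    rw [card_insert_of_notMem hcB', card_insert_of_notMem hd, hS]
  have ha_sdiff : a ∈ insert a (insert b S) \ insert c (insert d S) := by
    simp [hac, had, ha]
  obtain ⟨j, hj, hle⟩ := hexch _ _ hB hB' a ha_sdiff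
  rw [erase_insert haB] at hle
  have hj_cd : j = c ∨ j = d := by
    simp only [mem_sdiff, mem_insert] at hj
    tauto
  rcases hj_cd with rfl | rfl
  · rw [erase_insert hcB'] at hle
    exact Or.inl hle
  · rw [insert_comm c j S, erase_insert hdB'] at hle
    rw [insert_comm c j S]
    exact Or.inr hle

theorem stmt_13_general {E : Type*} [DecidableEq E] (r : ℕ) (ν : Finset E → WithTop ℝ)
    (hexch : ∀ B B' : Finset E, B.card = r → B'.card = r → ∀ i ∈ B \ B',
      ∃ j ∈ B' \ B, ν (insert j (B.erase i)) + ν (insert i (B'.erase j)) ≤ ν B + ν B')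
    (S : Finset E) (hS : S.card + 2 = r)
    (a b c d : E) (ha : a ∉ S) (hb : b ∉ S) (hc : c ∉ S) (hd : d ∉ S)
    (hab : a ≠ b) (hac : a ≠ c) (had : a ≠ d) (hbc : b ≠ c) (hbd : b ≠ d) (hcd : c ≠ d) :
    (ν (insert a (insert b S)) + ν (insert c (insert d S)) =
        min (ν (insert a (insert c S)) + ν (insert b (insert d S)))
            (ν (insert a (insert d S)) + ν (insert b (insert c S)))) ∨
    (ν (insert a (insert c S)) + ν (insert b (insert d S)) =
        min (ν (insert a (insert b S)) + ν (insert c (insert d S)))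
            (ν (insert a (insert d S)) + ν (insert b (insert c S)))) ∨
    (ν (insert a (insert d S)) + ν (insert b (insert c S)) =
        min (ν (insert a (insert b S)) + ν (insert c (insert d S)))
            (ν (insert a (insert c S)) + ν (insert b (insert d S)))) := by
  apply eq_min_or_eq_min_or_eq_min
  · simpa only [insert_comm, add_comm] using
      exchange_insert_insert_le r ν hexch S hS ha hb hc hd hab hac had hcd
  · simpa only [insert_comm, add_comm, or_comm] using
      exchange_insert_insert_le r ν hexch S hS ha hc hb hd hac hab had hbd
  · simpa only [insert_comm, add_comm, or_comm] using
      exchange_insert_insert_le r ν hexch S hS ha hd hb hc had hab hac hbc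

/-- For a matroid valuation `ν` on the `r`-subsets of `E` (valuated exchange axiom, not
identically `∞`), and `S` of size `r - 2` with four distinct elements `a,b,c,d ∉ S`, the
minimum of `ν(S∪ab)+ν(S∪cd)`, `ν(S∪ac)+ν(S∪bd)`, `ν(S∪ad)+ν(S∪bc)` is attained at least
twice. -/
theorem stmt_13 {E : Type*} [DecidableEq E] (r : ℕ) (ν : Finset E → WithTop ℝ)
    (hne : ∃ B : Finset E, B.card = r ∧ ν B ≠ ⊤)
    (hexch : ∀ B B' : Finset E, B.card = r → B'.card = r → ∀ i ∈ B \ B',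
      ∃ j ∈ B' \ B, ν (insert j (B.erase i)) + ν (insert i (B'.erase j)) ≤ ν B + ν B')
    (S : Finset E) (hS : S.card + 2 = r)
    (a b c d : E) (ha : a ∉ S) (hb : b ∉ S) (hc : c ∉ S) (hd : d ∉ S)
    (hab : a ≠ b) (hac : a ≠ c) (had : a ≠ d) (hbc : b ≠ c) (hbd : b ≠ d) (hcd : c ≠ d) :
    (ν (insert a (insert b S)) + ν (insert c (insert d S)) =
        min (ν (insert a (insert c S)) + ν (insert b (insert d S)))
            (ν (insert a (insert d S)) + ν (insert b (insert c S)))) ∨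
    (ν (insert a (insert c S)) + ν (insert b (insert d S)) =
        min (ν (insert a (insert b S)) + ν (insert c (insert d S)))
            (ν (insert a (insert d S)) + ν (insert b (insert c S)))) ∨
    (ν (insert a (insert d S)) + ν (insert b (insert c S)) =
        min (ν (insert a (insert b S)) + ν (insert c (insert d S)))
            (ν (insert a (insert c S)) + ν (insert b (insert d S)))) :=
  stmt_13_general r ν hexch S hS a b c d ha hb hc hd hab hac had hbc hbd hcd
end

section
/- Let M be a matroid on ground set E with valuation ν, and suppose i, j ∈ E are parallel elements of M (i.e., {i,j} is a circuit). Then there exists a constant c ∈ ℝ such that ν(S ∪ {i}) − ν(S ∪ {j}) = c for every S ⊆ E \ {i,j} such that S ∪ {i} is a basis of M. -/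
/-!
Exchanging `i ∈ S ∪ {i}` against `T ∪ {j}` can only bring in `j`: any other element
`y ∈ T` would produce a basis candidate containing both `i` and `j`, which has value `∞`.
Hence the exchange axiom gives `ν(S+j) + ν(T+i) ≤ ν(S+i) + ν(T+j)`, and by symmetry
equality, so `ν(S+i) − ν(S+j)` does not depend on `S`.
-/

open Finset

theorem parallel_exchange_le {E : Type*} [DecidableEq E] {r : ℕ} {ν : Finset E → WithTop ℝ}
    (hexch : ∀ B B' : Finset E, B.card = r → B'.card = r → ∀ x ∈ B \ B',
      ∃ y ∈ B' \ B, ν (insert y (B.erase x)) + ν (insert x (B'.erase y)) ≤ ν B + ν B')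
    {i j : E} (hij : i ≠ j)
    (hdep : ∀ B : Finset E, B.card = r → i ∈ B → j ∈ B → ν B = ⊤)
    {S T : Finset E} (hiS : i ∉ S) (hS : S.card + 1 = r)
    (hiT : i ∉ T) (hjT : j ∉ T) (hT : T.card + 1 = r) :
    ν (insert j S) + ν (insert i T) ≤ ν (insert i S) + ν (insert j T) := by
  by_cases hfin : ν (insert i S) + ν (insert j T) = ⊤
  · exact hfin ▸ le_top
  have hcardS : (insert i S).card = r := by rw [card_insert_of_notMem hiS, hS]
  have hcardT : (insert j T).card = r := by rw [card_insert_of_notMem hjT, hT]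
  have hi_notMem : i ∉ insert j T := by simp [hij, hiT]
  obtain ⟨y, hy, hle⟩ := hexch _ _ hcardS hcardT i (mem_sdiff.mpr ⟨mem_insert_self _ _, hi_notMem⟩)
  have hy_mem : y ∈ insert j T := (mem_sdiff.mp hy).1
  obtain rfl : y = j := by
    by_contra hyj
    have hcard : (insert i ((insert j T).erase y)).card = r := by
      rw [card_insert_of_notMem (fun h ↦ hi_notMem (mem_of_mem_erase h)),
        card_erase_of_mem hy_mem, hcardT]
      omega
    have htop := hdep _ hcard (mem_insert_self _ _)
      (mem_insert_of_mem (mem_erase.mpr ⟨Ne.symm hyj, mem_insert_self _ _⟩))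
    rw [htop, add_top, top_le_iff] at hle
    exact hfin hle
  rwa [erase_insert hiS, erase_insert hjT] at hle

theorem stmt_14_general {E : Type*} [DecidableEq E] (r : ℕ) (ν : Finset E → WithTop ℝ)
    (hexch : ∀ B B' : Finset E, B.card = r → B'.card = r → ∀ x ∈ B \ B',
      ∃ y ∈ B' \ B, ν (insert y (B.erase x)) + ν (insert x (B'.erase y)) ≤ ν B + ν B')
    (i j : E) (hij : i ≠ j)
    (hdep : ∀ B : Finset E, B.card = r → i ∈ B → j ∈ B → ν B = ⊤)
    (hpar : ∀ S : Finset E, i ∉ S → j ∉ S → S.card + 1 = r →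
      (ν (insert i S) ≠ ⊤ ↔ ν (insert j S) ≠ ⊤)) :
    ∃ c : ℝ, ∀ S : Finset E, i ∉ S → j ∉ S → S.card + 1 = r →
      ν (insert i S) ≠ ⊤ → ν (insert i S) = ν (insert j S) + (c : WithTop ℝ) := by
  by_cases hbasis : ∃ S₀ : Finset E, i ∉ S₀ ∧ j ∉ S₀ ∧ S₀.card + 1 = r ∧ ν (insert i S₀) ≠ ⊤
  swap
  · exact ⟨0, fun S hiS hjS hS hfin ↦ absurd ⟨S, hiS, hjS, hS, hfin⟩ hbasis⟩
  obtain ⟨S₀, hiS₀, hjS₀, hS₀, hfin₀⟩ := hbasis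
  lift ν (insert j S₀) to ℝ using (hpar S₀ hiS₀ hjS₀ hS₀).mp hfin₀ with b₀ hb₀
  lift ν (insert i S₀) to ℝ using hfin₀ with a₀ ha₀
  refine ⟨a₀ - b₀, fun S hiS hjS hS hfin ↦ ?_⟩
  have hle := parallel_exchange_le hexch hij hdep hiS hS hiS₀ hjS₀ hS₀
  have hge := parallel_exchange_le hexch hij hdep hiS₀ hS₀ hiS hjS hS
  rw [← ha₀, ← hb₀] at hle hge
  lift ν (insert j S) to ℝ using (hpar S hiS hjS hS).mp hfin with b hb
  lift ν (insert i S) to ℝ using hfin with a ha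
  norm_cast at hle hge ⊢
  linarith

/-- If `i, j` are parallel elements of a valuated matroid `(M, ν)` of rank `r` (every
`r`-set containing both `i` and `j` is dependent, and `S ∪ {i}` is a basis iff `S ∪ {j}`
is), then the difference `ν(S ∪ {i}) − ν(S ∪ {j})` is a constant `c`, over all `S` avoiding
`i, j` for which `S ∪ {i}` is a basis. -/
theorem stmt_14 {E : Type*} [DecidableEq E] (r : ℕ) (ν : Finset E → WithTop ℝ)
    (hne : ∃ B : Finset E, B.card = r ∧ ν B ≠ ⊤)
    (hexch : ∀ B B' : Finset E, B.card = r → B'.card = r → ∀ x ∈ B \ B',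
      ∃ y ∈ B' \ B, ν (insert y (B.erase x)) + ν (insert x (B'.erase y)) ≤ ν B + ν B')
    (i j : E) (hij : i ≠ j)
    (hdep : ∀ B : Finset E, B.card = r → i ∈ B → j ∈ B → ν B = ⊤)
    (hpar : ∀ S : Finset E, i ∉ S → j ∉ S → S.card + 1 = r →
      (ν (insert i S) ≠ ⊤ ↔ ν (insert j S) ≠ ⊤)) :
    ∃ c : ℝ, ∀ S : Finset E, i ∉ S → j ∉ S → S.card + 1 = r →
      ν (insert i S) ≠ ⊤ → ν (insert i S) = ν (insert j S) + (c : WithTop ℝ) :=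
  stmt_14_general r ν hexch i j hij hdep hpar
end

section
/- Let u be an element of a division ring Q such that u, u², …, u^{p³−1} are distinct and u^{p³−1} = 1 (i.e., u is a primitive (p³−1)-th root of unity), where p is a prime. If every element of Q has degree at most 2 over the central subfield ℚ (i.e., satisfies a monic polynomial of degree ≤ 2 with rational coefficients), then p³ − 1 divides an integer N with φ(p³−1) ≤ 2, which is impossible for any prime p; hence no such u exists in Q. -/
/-!
Since `u` commutes with itself, it generates a commutative subalgebra of `Q`, which is a domain of
characteristic zero; there `u` is a primitive `n`-th root of unity, `n = p³ - 1`, so its minimal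
polynomial over `ℚ` has degree at least `φ n`. The quadratic relation bounds that degree by `2`,
while `φ n ≥ 3` because `n ≥ 7` has a unit residue other than `±1`.
-/

open Polynomial
open scoped Nat IsMulCommutative

namespace Nat

theorem three_le_totient_of_coprime {n k : ℕ} (hk : 2 ≤ k) (hkn : k + 2 ≤ n)
    (hcop : n.Coprime k) : 3 ≤ φ n := by
  have hsub : ({1, k, n - 1} : Finset ℕ) ⊆ {a ∈ Finset.range n | n.Coprime a} := by
    intro a ha
    simp only [Finset.mem_insert, Finset.mem_singleton] at ha
    rcases ha with rfl | rfl | rfl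
    · simp only [Finset.mem_filter, Finset.mem_range, coprime_one_right_eq_true, and_true]; omega
    · exact Finset.mem_filter.2 ⟨Finset.mem_range.2 (by omega), hcop⟩
    · refine Finset.mem_filter.2 ⟨Finset.mem_range.2 (by omega), ?_⟩
      exact (coprime_self_sub_right (by omega)).2 (coprime_one_right n)
  have hcard : ({1, k, n - 1} : Finset ℕ).card = 3 := by
    rw [Finset.card_insert_of_notMem, Finset.card_pair] <;> simp <;> omega
  rw [totient_eq_card_coprime, ← hcard]
  exact Finset.card_le_card hsub

theorem exists_coprime_of_seven_le {n : ℕ} (hn : 7 ≤ n) :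
    ∃ k, 2 ≤ k ∧ k + 2 ≤ n ∧ n.Coprime k := by
  rcases n.even_or_odd with ⟨m, rfl⟩ | hodd
  · -- an odd `k` with `m + m = 2 ^ j + k * 2`, `j ∈ {1, 2}`, is coprime to `m + m`
    obtain ⟨k, j, hj, hk, hmk, h2k, hkm⟩ : ∃ k j, 0 < j ∧ Odd k ∧ m + m = 2 ^ j + k * 2 ∧
        2 ≤ k ∧ k + 2 ≤ m + m := by
      rcases m.even_or_odd with ⟨l, rfl⟩ | ⟨l, rfl⟩
      · exact ⟨2 * l - 1, 1, by omega, ⟨l - 1, by omega⟩, by omega, by omega, by omega⟩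
      · exact ⟨2 * l - 1, 2, by omega, ⟨l - 1, by omega⟩, by omega, by omega, by omega⟩
    refine ⟨k, h2k, hkm, ?_⟩
    rw [hmk, coprime_add_mul_left_left, coprime_pow_left_iff hj]
    exact coprime_two_left.2 hk
  · exact ⟨2, le_rfl, by omega, coprime_two_right.2 hodd⟩

theorem three_le_totient {n : ℕ} (hn : 7 ≤ n) : 3 ≤ φ n :=
  let ⟨_, hk, hkn, hcop⟩ := exists_coprime_of_seven_le hn
  three_le_totient_of_coprime hk hkn hcop

end Nat

theorem natDegree_minpoly_rat_le_two {D : Type*} [DivisionRing D] [CharZero D] {x : D} {b c : ℚ}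
    (h : x ^ 2 + b * x + c = 0) : (minpoly ℚ x).natDegree ≤ 2 := by
  have hq : natDegree (C 1 * X ^ 2 + C b * X + C c) = 2 := natDegree_quadratic one_ne_zero
  refine natDegree_le_of_degree_le <|
    hq ▸ (minpoly.degree_le_of_ne_zero ℚ x ?_ ?_).trans degree_le_natDegree
  · exact ne_zero_of_natDegree_gt (hq ▸ two_pos)
  · simpa [Algebra.algebraMap_eq_smul_one, Rat.smul_def] using h

theorem totient_orderOf_le_natDegree_minpoly_rat {D : Type*} [DivisionRing D] [CharZero D]
    {u : D} (hu : IsOfFinOrder u) : φ (orderOf u) ≤ (minpoly ℚ u).natDegree := by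
  let A := Algebra.adjoin ℚ {u}
  have hinj : Function.Injective A.val := Subtype.val_injective
  let v : A := ⟨u, Algebra.self_mem_adjoin_singleton ℚ u⟩
  have hprim : IsPrimitiveRoot v (orderOf u) :=
    orderOf_injective A.val.toMonoidHom hinj v ▸ IsPrimitiveRoot.orderOf v
  calc φ (orderOf u) ≤ (minpoly ℤ v).natDegree := hprim.totient_le_degree_minpoly
    _ = (minpoly ℚ v).natDegree := by
      rw [minpoly.isIntegrallyClosed_eq_field_fractions' ℚ (hprim.isIntegral hu.orderOf_pos),
        natDegree_map_eq_of_injective (algebraMap ℤ ℚ).injective_int]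
    _ = (minpoly ℚ u).natDegree := by rw [← minpoly.algHom_eq A.val hinj v]; rfl

/-- In a division ring `Q` of characteristic zero in which every element has degree at most
2 over the central subfield `ℚ`, there is no primitive `(p³ − 1)`-th root of unity `u`
(for `p` prime): the powers `u, u², …, u^{p³−1}` being distinct with `u^{p³−1} = 1` leads
to a contradiction, since a primitive `(p³−1)`-th root of unity has degree
`φ(p³−1) ≥ 3` over `ℚ`. -/
theorem stmt_15 {Q : Type*} [DivisionRing Q] [CharZero Q]
    (p : ℕ) (hp : p.Prime) (u : Q)
    (hroot : u ^ (p ^ 3 - 1) = 1)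
    (hdist : ∀ i j : ℕ, 1 ≤ i → i < j → j ≤ p ^ 3 - 1 → u ^ i ≠ u ^ j)
    (hdeg2 : ∀ x : Q, ∃ b c : ℚ, x ^ 2 + (b : Q) * x + (c : Q) = 0) :
    False := by
  have hn : 7 ≤ p ^ 3 - 1 := by
    have : 2 ^ 3 ≤ p ^ 3 := Nat.pow_le_pow_left hp.two_le 3
    omega
  have horder : orderOf u = p ^ 3 - 1 := by
    refine (orderOf_eq_iff (by omega)).2 ⟨hroot, fun i hin hi hui ↦ ?_⟩
    exact hdist i _ hi hin le_rfl (hui.trans hroot.symm)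
  obtain ⟨b, c, hbc⟩ := hdeg2 u
  have hfin : IsOfFinOrder u := isOfFinOrder_iff_pow_eq_one.2 ⟨_, by omega, hroot⟩
  exact absurd
    (calc 3 ≤ φ (p ^ 3 - 1) := Nat.three_le_totient hn
      _ = φ (orderOf u) := by rw [horder]
      _ ≤ (minpoly ℚ u).natDegree := totient_orderOf_le_natDegree_minpoly_rat hfin
      _ ≤ 2 := natDegree_minpoly_rat_le_two hbc)
    (by decide)
end

section
/- Let Q be a division ring with surjective discrete valuation v, valuation ring R, residue field L (assumed commutative), and uniformizer π ∈ R with induced automorphism φ of L given by x̄ ↦ (πxπ⁻¹)‾. For a right Q-subspace V ⊆ Qⁿ and α ∈ ℤⁿ, define V_α ⊆ Lⁿ as the reduction of (π^{−α}V) ∩ Rⁿ, where π^{−α} is the diagonal matrix with entries π^{−α₁}, …, π^{−αₙ}. Then V_{α−(1,…,1)} = φ(V_α) for all α ∈ ℤⁿ, where φ is applied coordinatewise. -/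
/-- The member `V_α ⊆ Lⁿ` of the linear flock of a right `Q`-subspace `V ⊆ Qⁿ`:
the coordinatewise residue reduction (via `ρ : Q → L`) of `(π^{-α} V) ∩ Rⁿ`, where
`π^{-α}` acts diagonally by left multiplication and `R = {x | 0 ≤ v x}`. -/
def flockPiece {Q L : Type*} [DivisionRing Q] [Field L]
    (v : Q → WithTop ℤ) (ρ : Q → L) (π : Q) {n : ℕ}
    (V : Submodule Qᵐᵒᵖ (Fin n → Q)) (α : Fin n → ℤ) : Set (Fin n → L) :=
  {y : Fin n → L | ∃ x ∈ V, (∀ i, 0 ≤ v (π ^ (-(α i)) * x i)) ∧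
    y = fun i => ρ (π ^ (-(α i)) * x i)}

/-!
Right multiplication by `π` is a bijection of the right subspace `V`, and coordinatewise
`π^{-(α-1)} x = π (π^{-α} (x π)) π⁻¹`. Conjugation by `π` preserves `v`, so it preserves
integrality, and on `R` it reduces to `φ`. Hence `x ↦ x π` carries the vectors defining
`V_{α-(1,…,1)}` to those defining `V_α`, with residues related by `φ`.
-/

theorem val_mul_mul_inv_eq {Q Γ : Type*} [GroupWithZero Q] [AddCommMonoid Γ]
    [IsRightCancelAdd Γ] (v : Q → WithTop Γ) (hmul : ∀ a b : Q, v (a * b) = v a + v b)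
    (htop : ∀ x : Q, v x = ⊤ ↔ x = 0) {a : Q} (ha : a ≠ 0) (b : Q) :
    v (a * b * a⁻¹) = v b := by
  refine WithTop.add_right_cancel (z := v a) (mt (htop a).1 ha) ?_
  rw [← hmul, inv_mul_cancel_right₀ ha, hmul, add_comm]

theorem mul_zpow_neg_mul_mul_inv {G : Type*} [GroupWithZero G] {π : G} (hπ : π ≠ 0)
    (k : ℤ) (y : G) :
    π * (π ^ (-k) * y) * π⁻¹ = π ^ (-(k - 1)) * (y * π⁻¹) := by
  rw [show -(k - 1) = 1 + -k by ring, zpow_add₀ hπ, zpow_one, mul_assoc, mul_assoc,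
    mul_assoc]

theorem stmt_18_general {Q L : Type*} [DivisionRing Q] [Field L]
    (v : Q → WithTop ℤ)
    (hmul : ∀ a b : Q, v (a * b) = v a + v b)
    (htop : ∀ x : Q, v x = ⊤ ↔ x = 0)
    (ρ : Q → L)
    (π : Q) (hπ : v π = (1 : ℤ))
    (φ : L ≃+* L) (hφ : ∀ x : Q, 0 ≤ v x → φ (ρ x) = ρ (π * x * π⁻¹))
    {n : ℕ} (V : Submodule Qᵐᵒᵖ (Fin n → Q)) (α : Fin n → ℤ) :
    flockPiece v ρ π V (fun i => α i - 1) =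
      (fun y : Fin n → L => fun i => φ (y i)) '' flockPiece v ρ π V α := by
  have hπ0 : π ≠ 0 := by rintro rfl; simp [(htop 0).2 rfl] at hπ
  have hconj := val_mul_mul_inv_eq v hmul htop hπ0
  have hshift := mul_zpow_neg_mul_mul_inv hπ0
  ext y
  constructor
  · rintro ⟨x, hx, hint, rfl⟩
    have key i :
        π * (π ^ (-α i) * (MulOpposite.op π • x) i) * π⁻¹ = π ^ (-(α i - 1)) * x i := by
      rw [hshift]; exact congrArg _ (mul_inv_cancel_right₀ hπ0 _)
    have hint' i : 0 ≤ v (π ^ (-α i) * (MulOpposite.op π • x) i) := by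
      rw [← hconj, key]; exact hint i
    refine ⟨_, ⟨MulOpposite.op π • x, V.smul_mem _ hx, hint', rfl⟩, funext fun i => ?_⟩
    exact (hφ _ (hint' i)).trans (congrArg ρ (key i))
  · rintro ⟨_, ⟨x, hx, hint, rfl⟩, rfl⟩
    refine ⟨MulOpposite.op π⁻¹ • x, V.smul_mem _ hx, fun i => ?_, funext fun i => ?_⟩
    · change 0 ≤ v (π ^ (-(α i - 1)) * (x i * π⁻¹))
      rw [← hshift, hconj]
      exact hint i
    · exact (hφ _ (hint i)).trans (congrArg ρ (hshift _ _))

/-- Flock axiom (2): `V_{α-(1,…,1)} = φ(V_α)`, where `φ` is the residue automorphism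
`x̄ ↦ (π x π⁻¹)‾` of the commutative residue field `L` of a division ring `Q` with a
surjective discrete valuation `v` and uniformizer `π`, applied coordinatewise. -/
theorem stmt_18 {Q L : Type*} [DivisionRing Q] [Field L]
    (v : Q → WithTop ℤ)
    (hmul : ∀ a b : Q, v (a * b) = v a + v b)
    (hadd : ∀ a b : Q, min (v a) (v b) ≤ v (a + b))
    (htop : ∀ x : Q, v x = ⊤ ↔ x = 0)
    (hsurjv : ∀ m : ℤ, ∃ x : Q, v x = (m : WithTop ℤ))
    (ρ : Q → L)
    (hρ1 : ρ 1 = 1)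
    (hρadd : ∀ x y : Q, 0 ≤ v x → 0 ≤ v y → ρ (x + y) = ρ x + ρ y)
    (hρmul : ∀ x y : Q, 0 ≤ v x → 0 ≤ v y → ρ (x * y) = ρ x * ρ y)
    (hρker : ∀ x : Q, 0 ≤ v x → (ρ x = 0 ↔ 0 < v x))
    (hρsurj : ∀ l : L, ∃ x : Q, 0 ≤ v x ∧ ρ x = l)
    (π : Q) (hπ : v π = (1 : ℤ))
    (φ : L ≃+* L) (hφ : ∀ x : Q, 0 ≤ v x → φ (ρ x) = ρ (π * x * π⁻¹))
    {n : ℕ} (V : Submodule Qᵐᵒᵖ (Fin n → Q)) (α : Fin n → ℤ) :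
    flockPiece v ρ π V (fun i => α i - 1) =
      (fun y : Fin n → L => fun i => φ (y i)) '' flockPiece v ρ π V α :=
  stmt_18_general v hmul htop ρ π hπ φ hφ V α
end

section
/- Let Q be a division ring with surjective discrete valuation v, valuation ring R, commutative residue field L, and uniformizer π. Let V ⊆ Qⁿ be a right Q-subspace and define V_α as the reduction of (π^{−α}V) ∩ Rⁿ in Lⁿ for α ∈ ℤⁿ. Then for every α ∈ ℤⁿ and every i ∈ {1,…,n}: V_α ∩ {x : xᵢ = 0} equals the image of V_{α+eᵢ} under the map setting the i-th coordinate to zero, where eᵢ is the i-th standard basis vector. -/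
theorem WithTop.zero_lt_one_add_iff (w : WithTop ℤ) : 0 < 1 + w ↔ 0 ≤ w := by
  induction w using WithTop.recTopCoe with
  | top => simp
  | coe m => norm_cast; omega

section

variable {Q : Type*} [DivisionRing Q] {v : Q → WithTop ℤ} {π : Q}

theorem valuation_zpow_neg_mul_eq_one_add (hmul : ∀ a b : Q, v (a * b) = v a + v b)
    (hπ0 : π ≠ 0) (hπ : v π = (1 : ℤ)) (a : ℤ) (x : Q) :
    v (π ^ (-a) * x) = 1 + v (π ^ (-(a + 1)) * x) := by
  rw [show -a = 1 + -(a + 1) by ring, zpow_add₀ hπ0, zpow_one, mul_assoc, hmul, hπ]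
  rfl

theorem residue_eq_zero_iff_nonneg_valuation_shift {L : Type*} [Zero L] {ρ : Q → L}
    (hmul : ∀ a b : Q, v (a * b) = v a + v b)
    (hρker : ∀ x : Q, 0 ≤ v x → (ρ x = 0 ↔ 0 < v x))
    (hπ0 : π ≠ 0) (hπ : v π = (1 : ℤ)) (a : ℤ) (x : Q) :
    (0 ≤ v (π ^ (-a) * x) ∧ ρ (π ^ (-a) * x) = 0) ↔ 0 ≤ v (π ^ (-(a + 1)) * x) := by
  rw [← WithTop.zero_lt_one_add_iff (v (π ^ (-(a + 1)) * x)),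
    ← valuation_zpow_neg_mul_eq_one_add hmul hπ0 hπ]
  constructor
  · rintro ⟨hint, hres⟩
    exact (hρker _ hint).mp hres
  · intro hpos
    exact ⟨hpos.le, (hρker _ hpos.le).mpr hpos⟩

end

theorem stmt_19_general {Q L : Type*} [DivisionRing Q] [Field L]
    (v : Q → WithTop ℤ)
    (hmul : ∀ a b : Q, v (a * b) = v a + v b)
    (htop : ∀ x : Q, v x = ⊤ ↔ x = 0)
    (ρ : Q → L)
    (hρker : ∀ x : Q, 0 ≤ v x → (ρ x = 0 ↔ 0 < v x))
    (π : Q) (hπ : v π = (1 : ℤ))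
    {n : ℕ} (V : Submodule Qᵐᵒᵖ (Fin n → Q)) (α : Fin n → ℤ) (i : Fin n) :
    flockPiece v ρ π V α ∩ {y : Fin n → L | y i = 0} =
      (fun y : Fin n → L => Function.update y i 0) ''
        flockPiece v ρ π V (fun j => α j + (if j = i then 1 else 0)) := by
  have hπ0 : π ≠ 0 := fun h => by simp [h, (htop 0).mpr rfl] at hπ
  have key := residue_eq_zero_iff_nonneg_valuation_shift (ρ := ρ) hmul hρker hπ0 hπ
  ext y
  simp only [flockPiece, Set.mem_inter_iff, Set.mem_image, Set.mem_ofPred_eq]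
  constructor
  · rintro ⟨⟨x, hxV, hx, rfl⟩, hyi⟩
    refine ⟨_, ⟨x, hxV, fun j => ?_, rfl⟩, funext fun j => ?_⟩
    all_goals rcases eq_or_ne j i with rfl | hj
    · simpa using (key (α j) (x j)).mp ⟨hx j, hyi⟩
    · simpa [hj] using hx j
    · simpa using hyi.symm
    · simp [hj]
  · rintro ⟨_, ⟨x, hxV, hx, rfl⟩, rfl⟩
    have hi := (key (α i) (x i)).mpr (by simpa using hx i)
    refine ⟨⟨x, hxV, fun j => ?_, funext fun j => ?_⟩, by simp⟩
    all_goals rcases eq_or_ne j i with rfl | hj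
    · exact hi.1
    · simpa [hj] using hx j
    · simpa using hi.2.symm
    · simp [hj]

/-- Flock axiom (1): `V_α / i = V_{α+eᵢ} \ i`, i.e. the intersection of `V_α` with the
hyperplane `{xᵢ = 0}` equals the image of `V_{α+eᵢ}` under setting the `i`-th coordinate
to zero. -/
theorem stmt_19 {Q L : Type*} [DivisionRing Q] [Field L]
    (v : Q → WithTop ℤ)
    (hmul : ∀ a b : Q, v (a * b) = v a + v b)
    (hadd : ∀ a b : Q, min (v a) (v b) ≤ v (a + b))
    (htop : ∀ x : Q, v x = ⊤ ↔ x = 0)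
    (hsurjv : ∀ m : ℤ, ∃ x : Q, v x = (m : WithTop ℤ))
    (ρ : Q → L)
    (hρ1 : ρ 1 = 1)
    (hρadd : ∀ x y : Q, 0 ≤ v x → 0 ≤ v y → ρ (x + y) = ρ x + ρ y)
    (hρmul : ∀ x y : Q, 0 ≤ v x → 0 ≤ v y → ρ (x * y) = ρ x * ρ y)
    (hρker : ∀ x : Q, 0 ≤ v x → (ρ x = 0 ↔ 0 < v x))
    (hρsurj : ∀ l : L, ∃ x : Q, 0 ≤ v x ∧ ρ x = l)
    (π : Q) (hπ : v π = (1 : ℤ))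
    {n : ℕ} (V : Submodule Qᵐᵒᵖ (Fin n → Q)) (α : Fin n → ℤ) (i : Fin n) :
    flockPiece v ρ π V α ∩ {y : Fin n → L | y i = 0} =
      (fun y : Fin n → L => Function.update y i 0) ''
        flockPiece v ρ π V (fun j => α j + (if j = i then 1 else 0)) :=
  stmt_19_general v hmul htop ρ hρker π hπ V α i
end
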